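/- arXiv:1303.4779 — 3 statements merged into one kernel-verified Lean document; each statement's English description precedes it below -/
import Mathlib

section
/- Let (v₁, v₂, v₃) and (w₁, w₂, w₃) be triples of vectors in ℂ² with π(v₁, v₂, v₃) = π(w₁, w₂, w₃) ≠ (0,0,0), where π(v₁, v₂, v₃) = (det(v₂, v₃), det(v₁, v₃), det(v₁, v₂)). Then there exists a unique g ∈ SL₂(ℂ) with g·vᵢ = wᵢ for i = 1, 2, 3. -/
def det2 (u w : Fin 2 → ℂ) : ℂ := u 0 * w 1 - u 1 * w 0

def quotMap (v₁ v₂ v₃ : Fin 2 → ℂ) : ℂ × ℂ × ℂ :=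
  (det2 v₂ v₃, det2 v₁ v₃, det2 v₁ v₂)

/-! If `det[a, b]` is a unit, the matrix `A = [a b]` with columns `a, b` is invertible, and an
element `g ∈ SL₂` with `g a = a'`, `g b = b'` is the same as one with `g A = A'`; its only candidate
`A' A⁻¹` has determinant one precisely because `det A' = det A`. By Cramer's rule the coordinates of
`c` in the basis `a, b` are `det[c, b] / det[a, b]` and `det[a, c] / det[a, b]`, which are also the
coordinates of `c'` in the basis `a', b'`; hence `g c = c'`. Some `det[vᵢ, vⱼ]` is nonzero, and
that pair plays the role of `a, b`. -/

open Matrix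

namespace Matrix.SpecialLinearGroup

variable {n R : Type*} [Fintype n] [DecidableEq n] [CommRing R]

theorem existsUnique_mul_eq {A A' : Matrix n n R} (hA : IsUnit A.det) (hdet : A.det = A'.det) :
    ∃! g : SpecialLinearGroup n R, (g : Matrix n n R) * A = A' := by
  have hg : (A' * A⁻¹).det = 1 := by
    rw [det_mul, det_nonsing_inv, ← hdet, Ring.mul_inverse_cancel _ hA]
  refine ⟨⟨A' * A⁻¹, hg⟩, nonsing_inv_mul_cancel_right _ _ hA, fun g hgA => Subtype.ext ?_⟩
  change (g : Matrix n n R) = A' * A⁻¹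
  rw [← hgA, mul_nonsing_inv_cancel_right _ _ hA]

theorem mulVec_eq_of_mul_eq_of_cramer_eq (g : SpecialLinearGroup n R) {A A' : Matrix n n R}
    (hA : IsUnit A.det) (hgA : (g : Matrix n n R) * A = A') {x x' : n → R}
    (hx : A.cramer x = A'.cramer x') : (g : Matrix n n R) *ᵥ x = x' := by
  have hdet : A'.det = A.det := by rw [← hgA, det_mul, det_coe, one_mul]
  rw [← hA.smul_left_cancel]
  calc A.det • ((g : Matrix n n R) *ᵥ x) = (g : Matrix n n R) *ᵥ (A *ᵥ A.cramer x) := by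
        rw [mulVec_cramer, mulVec_smul]
    _ = A' *ᵥ A'.cramer x' := by rw [mulVec_mulVec, hgA, hx]
    _ = A.det • x' := by rw [mulVec_cramer, hdet]

end Matrix.SpecialLinearGroup

section FinTwo

variable {R : Type*} [CommRing R]

theorem mul_transpose_of_eq_iff (g : Matrix (Fin 2) (Fin 2) R) (a b a' b' : Fin 2 → R) :
    g * (of ![a, b])ᵀ = (of ![a', b'])ᵀ ↔ g *ᵥ a = a' ∧ g *ᵥ b = b' := by
  rw [← transpose_inj, transpose_mul, transpose_transpose, transpose_transpose]
  simp [cons_mul, vecMul_transpose]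

theorem cramer_transpose_of (a b c : Fin 2 → R) :
    (of ![a, b])ᵀ.cramer c = ![(of ![c, b]).det, (of ![a, c]).det] := by
  ext i
  fin_cases i <;> simp [cramer_apply, det_fin_two] <;> ring

theorem det_of_swap (u w : Fin 2 → R) : (of ![w, u]).det = -(of ![u, w]).det := by
  simp only [det_fin_two, of_apply, cons_val_zero, cons_val_one]
  ring

theorem existsUnique_specialLinearGroup_mulVec_eq {a b c a' b' c' : Fin 2 → R}
    (hab : IsUnit (of ![a, b]).det) (hab' : (of ![a, b]).det = (of ![a', b']).det)
    (hcb : (of ![c, b]).det = (of ![c', b']).det) (hac : (of ![a, c]).det = (of ![a', c']).det) :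
    ∃! g : SpecialLinearGroup (Fin 2) R,
      (g : Matrix (Fin 2) (Fin 2) R) *ᵥ a = a' ∧
      (g : Matrix (Fin 2) (Fin 2) R) *ᵥ b = b' ∧
      (g : Matrix (Fin 2) (Fin 2) R) *ᵥ c = c' := by
  have hA : IsUnit (of ![a, b])ᵀ.det := by rwa [det_transpose]
  have hdet : (of ![a, b])ᵀ.det = (of ![a', b'])ᵀ.det := by rwa [det_transpose, det_transpose]
  obtain ⟨g, hgA, hg_unique⟩ := SpecialLinearGroup.existsUnique_mul_eq hA hdet
  obtain ⟨hga, hgb⟩ := (mul_transpose_of_eq_iff _ _ _ _ _).1 hgA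
  have hgc := g.mulVec_eq_of_mul_eq_of_cramer_eq hA hgA (x := c) (x' := c')
    (by rw [cramer_transpose_of, cramer_transpose_of, hcb, hac])
  exact ⟨g, ⟨hga, hgb, hgc⟩, fun g' ⟨ha, hb, _⟩ =>
    hg_unique g' ((mul_transpose_of_eq_iff _ _ _ _ _).2 ⟨ha, hb⟩)⟩

end FinTwo

theorem det2_eq_det (u w : Fin 2 → ℂ) : det2 u w = (of ![u, w]).det := by
  simp [det2, det_fin_two]

theorem fiber_single_free_orbit (v₁ v₂ v₃ w₁ w₂ w₃ : Fin 2 → ℂ)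
    (heq : quotMap v₁ v₂ v₃ = quotMap w₁ w₂ w₃)
    (hne : quotMap v₁ v₂ v₃ ≠ (0, 0, 0)) :
    ∃! g : Matrix.SpecialLinearGroup (Fin 2) ℂ,
      (g : Matrix (Fin 2) (Fin 2) ℂ).mulVec v₁ = w₁ ∧
      (g : Matrix (Fin 2) (Fin 2) ℂ).mulVec v₂ = w₂ ∧
      (g : Matrix (Fin 2) (Fin 2) ℂ).mulVec v₃ = w₃ := by
  simp only [quotMap, det2_eq_det, Ne, Prod.mk.injEq] at heq hne
  obtain ⟨h23, h13, h12⟩ := heq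
  have h32 : (of ![v₃, v₂]).det = (of ![w₃, w₂]).det := by rw [det_of_swap, det_of_swap w₂, h23]
  have h21 : (of ![v₂, v₁]).det = (of ![w₂, w₁]).det := by rw [det_of_swap, det_of_swap w₁, h12]
  rcases not_and_or.1 hne with h | h
  · simpa only [and_comm, and_left_comm] using
      existsUnique_specialLinearGroup_mulVec_eq (Ne.isUnit h) h23 h13 h21
  rcases not_and_or.1 h with h | h
  · simpa only [and_comm, and_left_comm] using
      existsUnique_specialLinearGroup_mulVec_eq (Ne.isUnit h) h13 h23 h12
  · exact existsUnique_specialLinearGroup_mulVec_eq (Ne.isUnit h) h12 h32 h13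
end

section
/- Let a₁, …, a_n be nonzero integers (n ≥ 2) such that every n−1 of them have greatest common divisor 1. Consider the action of ℂ* on ℂⁿ given by t·(x₁, …, x_n) = (t^{a₁}x₁, …, t^{a_n}x_n). Then every point x ∈ ℂⁿ with at most one zero coordinate has trivial stabiliser: t·x = x implies t = 1. -/
lemma zpow_gcd_one {t : ℂ} (ht : t ≠ 0) {ι : Type*} [DecidableEq ι] (s : Finset ι) (f : ι → ℤ)
    (h : ∀ i ∈ s, t ^ (f i) = 1) : t ^ (s.gcd f) = 1 := by
  induction s using Finset.induction with
  | empty => simp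
  | @insert i s hi ih =>
    rw [Finset.gcd_insert]
    have h1 : t ^ (f i) = 1 := h i (Finset.mem_insert_self _ _)
    have h2 : t ^ (s.gcd f) = 1 := ih fun j hj => h j (Finset.mem_insert_of_mem hj)
    have := Int.gcd_eq_gcd_ab (f i) (s.gcd f)
    rw [← Int.coe_gcd, this, zpow_add₀ ht, zpow_mul, zpow_mul, h1, h2, one_zpow, one_zpow,
      one_mul]

theorem cstar_action_trivial_stabiliser (n : ℕ) (hn : 2 ≤ n) (a : Fin n → ℤ)
    (ha : ∀ i, a i ≠ 0)
    (hgcd : ∀ i : Fin n, (Finset.univ.erase i).gcd a = 1)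
    (x : Fin n → ℂ)
    (hx : ∀ i j : Fin n, x i = 0 → x j = 0 → i = j)
    (t : ℂ) (ht : t ≠ 0)
    (hfix : ∀ i, t ^ (a i) * x i = x i) :
    t = 1 := by
  have hne : Nonempty (Fin n) := ⟨⟨0, by omega⟩⟩
  obtain ⟨i₀, hi₀⟩ : ∃ i₀ : Fin n, ∀ j ≠ i₀, x j ≠ 0 := by
    by_cases h : ∃ i, x i = 0
    · obtain ⟨i, hi⟩ := h
      exact ⟨i, fun j hj hxj => hj (hx j i hxj hi)⟩
    · push_neg at h
      exact ⟨Classical.arbitrary _, fun j _ => h j⟩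
  have key : t ^ ((Finset.univ.erase i₀).gcd a) = 1 := by
    apply zpow_gcd_one ht
    intro j hj
    have hxj := hi₀ j (Finset.mem_erase.mp hj).1
    have h := hfix j
    nth_rewrite 2 [← one_mul (x j)] at h
    exact mul_right_cancel₀ hxj h
  rw [hgcd i₀, zpow_one] at key
  exact key
end

section
/- Let a₁, …, a_n be integers and let ℂ* act on ℂⁿ by t·(x₁, …, x_n) = (t^{a₁}x₁, …, t^{a_n}x_n). If x ∈ ℂⁿ has some coordinate xᵢ ≠ 0 with aᵢ > 0 and some coordinate xⱼ ≠ 0 with aⱼ < 0, then the orbit ℂ*·x is a closed subset of ℂⁿ. -/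
theorem cstar_orbit_closed (n : ℕ) (a : Fin n → ℤ) (x : Fin n → ℂ)
    (i j : Fin n) (hi : x i ≠ 0) (hai : 0 < a i) (hj : x j ≠ 0) (haj : a j < 0) :
    IsClosed {y : Fin n → ℂ | ∃ t : ℂ, t ≠ 0 ∧ ∀ k, y k = t ^ (a k) * x k} := by
  rw [← isSeqClosed_iff_isClosed]
  intro u y hu huy
  choose t ht hty using hu
  -- convergence coordinatewise
  have hcoord : ∀ k, Filter.Tendsto (fun m => u m k) Filter.atTop (nhds (y k)) :=
    fun k => (tendsto_pi_nhds.mp huy) k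
  -- bound on norms of coordinates i and j
  obtain ⟨Ci, hCi⟩ : BddAbove (Set.range fun m => ‖u m i‖) :=
    ((hcoord i).norm).bddAbove_range
  obtain ⟨Cj, hCj⟩ : BddAbove (Set.range fun m => ‖u m j‖) :=
    ((hcoord j).norm).bddAbove_range
  have hCi' : ∀ m, ‖u m i‖ ≤ Ci := fun m => hCi ⟨m, rfl⟩
  have hCj' : ∀ m, ‖u m j‖ ≤ Cj := fun m => hCj ⟨m, rfl⟩
  have hxi : (0:ℝ) < ‖x i‖ := norm_pos_iff.mpr hi
  have hxj : (0:ℝ) < ‖x j‖ := norm_pos_iff.mpr hj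
  have htm : ∀ m, (0:ℝ) < ‖t m‖ := fun m => norm_pos_iff.mpr (ht m)
  have hnormk : ∀ m k, ‖u m k‖ = ‖t m‖ ^ (a k) * ‖x k‖ := by
    intro m k
    rw [hty m k, norm_mul, norm_zpow]
  have hCj0 : (0:ℝ) < Cj := by
    refine lt_of_lt_of_le ?_ (hCj' 0)
    rw [hnormk 0 j]
    exact mul_pos (zpow_pos (htm 0) _) hxj
  -- upper bound on ‖t m‖
  set M : ℝ := max 1 (Ci / ‖x i‖) with hM
  have hub : ∀ m, ‖t m‖ ≤ M := by
    intro m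
    rcases le_or_gt ‖t m‖ 1 with h | h
    · exact h.trans (le_max_left _ _)
    · refine le_trans ?_ (le_max_right _ _)
      have h1 : ‖t m‖ = ‖t m‖ ^ (1:ℤ) := (zpow_one _).symm
      have h2 : ‖t m‖ ^ (1:ℤ) ≤ ‖t m‖ ^ (a i) := zpow_le_zpow_right₀ h.le hai
      rw [le_div_iff₀ hxi]
      calc ‖t m‖ * ‖x i‖ ≤ ‖t m‖ ^ (a i) * ‖x i‖ := by
            nth_rewrite 1 [h1]; exact mul_le_mul_of_nonneg_right h2 hxi.le
        _ = ‖u m i‖ := (hnormk m i).symm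
        _ ≤ Ci := hCi' m
  -- lower bound on ‖t m‖
  set c : ℝ := min 1 (‖x j‖ / Cj) with hc
  have hc0 : 0 < c := lt_min one_pos (by positivity)
  have hlb : ∀ m, c ≤ ‖t m‖ := by
    intro m
    rcases le_or_gt 1 ‖t m‖ with h | h
    · exact (min_le_left _ _).trans h
    · refine (min_le_right _ _).trans ?_
      have hinv : 1 < (‖t m‖)⁻¹ := one_lt_inv₀ (htm m) |>.mpr h
      have h2 : (‖t m‖)⁻¹ ^ (1:ℤ) ≤ (‖t m‖)⁻¹ ^ (-(a j)) :=
        zpow_le_zpow_right₀ hinv.le (by omega)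
      have h3 : (‖t m‖)⁻¹ ≤ ‖t m‖ ^ (a j) := by
        rw [zpow_one] at h2
        rwa [zpow_neg, inv_zpow, inv_inv] at h2
      have h4 : ‖t m‖ ^ (a j) ≤ Cj / ‖x j‖ := by
        rw [le_div_iff₀ hxj]
        calc ‖t m‖ ^ (a j) * ‖x j‖ = ‖u m j‖ := (hnormk m j).symm
          _ ≤ Cj := hCj' m
      have h5 : (‖t m‖)⁻¹ ≤ Cj / ‖x j‖ := h3.trans h4
      rw [div_le_iff₀ hCj0]
      calc ‖x j‖ = ‖x j‖ * ((‖t m‖)⁻¹ * ‖t m‖) := by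
            rw [inv_mul_cancel₀ (htm m).ne', mul_one]
        _ = ((‖t m‖)⁻¹ * ‖x j‖) * ‖t m‖ := by ring
        _ ≤ (Cj / ‖x j‖ * ‖x j‖) * ‖t m‖ := by
            gcongr
        _ = ‖t m‖ * Cj := by
            rw [div_mul_cancel₀ _ hxj.ne']; ring
  -- compact annulus
  have hK : IsCompact (Metric.closedBall (0:ℂ) M ∩ {z : ℂ | c ≤ ‖z‖}) :=
    (isCompact_closedBall 0 M).inter_right (isClosed_le continuous_const continuous_norm)
  have hmem : ∀ m, t m ∈ Metric.closedBall (0:ℂ) M ∩ {z : ℂ | c ≤ ‖z‖} := fun m =>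
    ⟨by simpa [Metric.mem_closedBall, dist_zero_right] using hub m, hlb m⟩
  obtain ⟨t₀, ht₀mem, φ, hφ, hφt⟩ := hK.tendsto_subseq hmem
  have ht₀ : t₀ ≠ 0 := by
    intro h0
    have := ht₀mem.2
    rw [h0] at this
    simp at this
    exact absurd this (not_le.mpr hc0)
  refine ⟨t₀, ht₀, fun k => ?_⟩
  have h1 : Filter.Tendsto (fun m => u (φ m) k) Filter.atTop (nhds (y k)) :=
    (hcoord k).comp hφ.tendsto_atTop
  have h2 : Filter.Tendsto (fun m => t (φ m) ^ (a k) * x k) Filter.atTop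
      (nhds (t₀ ^ (a k) * x k)) := by
    exact (((continuousAt_zpow₀ t₀ (a k) (Or.inl ht₀)).tendsto).comp hφt).mul_const _
  have heq : (fun m => u (φ m) k) = fun m => t (φ m) ^ (a k) * x k := by
    funext m; exact hty (φ m) k
  rw [heq] at h1
  exact tendsto_nhds_unique h1 h2
end
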